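/- Suppose M is c-CDP and additionally ε-LDP, and for coordinate i the conditional distributions satisfy TV(π_{x_{-i} | x_i ∈ S_i}, π_{x_{-i} | x_i ∈ S_i'}) ≤ q_i for all coordinate events S_i, S_i' of positive prior probability. Then (π, M) is δ'-BCDP in coordinate i with δ'_i = min{c_i + log(1 + q_i e^{ε} − q_i), ε}. -/

import Mathlib

open Finset Real

/-!
For the remaining coordinates `z = x_{-i}`, let `g z` be the least value of `μ_x(R)` over the
fibre above `z`. By CDP, `μ_x(R) ≤ e^{c_i} g z` on that fibre, so the posterior given `Si` is at
most `e^{c_i}` times the mean of `g` under the conditional law of `z` given `Si`, while the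
posterior given `Si'` is at least the mean of `g` under the law given `Si'`. By LDP the oscillation
of `g` is at most `(e^ε - 1) min g`, so these two means differ by at most `q_i (e^ε - 1) min g`,
which gives the factor `1 + q_i e^ε - q_i`. The bound `e^ε` is LDP applied pointwise.
-/

noncomputable def tvDist {Z : Type*} [Fintype Z] (u v : Z → ℝ) : ℝ :=
  (1 / 2) * ∑ z, |u z - v z|

noncomputable def condLaw {X Z : Type*} [DecidableEq Z] (p : X → ℝ) (s : Finset X) (r : X → Z)
    (z : Z) : ℝ :=
  (∑ x ∈ s with r x = z, p x) / ∑ x ∈ s, p x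

section TotalVariation

variable {Z : Type*} [Fintype Z]

lemma tvDist_nonneg (u v : Z → ℝ) : 0 ≤ tvDist u v := by
  unfold tvDist
  positivity

lemma sum_sub_mul_le_tvDist_mul {u v g : Z → ℝ} {m M : ℝ} (huv : ∑ z, u z = ∑ z, v z)
    (hm : ∀ z, m ≤ g z) (hM : ∀ z, g z ≤ M) :
    ∑ z, (u z - v z) * g z ≤ tvDist u v * (M - m) := by
  have hcentre : ∑ z, (u z - v z) * g z = ∑ z, (u z - v z) * (g z - (m + M) / 2) := by
    simp only [mul_sub, sum_sub_distrib, ← sum_mul, huv, sub_self, zero_mul, sub_zero]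
  have hterm : ∀ z, (u z - v z) * (g z - (m + M) / 2) ≤ |u z - v z| * ((M - m) / 2) := fun z =>
    calc (u z - v z) * (g z - (m + M) / 2) ≤ |u z - v z| * |g z - (m + M) / 2| := by
          rw [← abs_mul]; exact le_abs_self _
      _ ≤ |u z - v z| * ((M - m) / 2) :=
          mul_le_mul_of_nonneg_left (abs_le.2 ⟨by linarith [hm z], by linarith [hM z]⟩)
            (abs_nonneg _)
  calc ∑ z, (u z - v z) * g z = ∑ z, (u z - v z) * (g z - (m + M) / 2) := hcentre
    _ ≤ ∑ z, |u z - v z| * ((M - m) / 2) := sum_le_sum fun z _ => hterm z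
    _ = tvDist u v * (M - m) := by rw [tvDist, ← sum_mul]; ring

lemma sum_mul_le_of_tvDist_le {u v g : Z → ℝ} {q K : ℝ} (hv : ∀ z, 0 ≤ v z)
    (huv : ∑ z, u z = ∑ z, v z) (hv1 : ∑ z, v z = 1) (hK : 1 ≤ K)
    (hg : ∀ z z', g z ≤ K * g z') (hq : tvDist u v ≤ q) :
    ∑ z, u z * g z ≤ (1 + q * K - q) * ∑ z, v z * g z := by
  have hZ : (univ : Finset Z).Nonempty := nonempty_of_sum_ne_zero (by rw [hv1]; exact one_ne_zero)
  obtain ⟨z₀, -, hz₀⟩ := exists_min_image univ g hZ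
  have hmin_le_mean : g z₀ ≤ ∑ z, v z * g z :=
    calc g z₀ = ∑ z, v z * g z₀ := by rw [← sum_mul, hv1, one_mul]
      _ ≤ ∑ z, v z * g z :=
          sum_le_sum fun z _ => mul_le_mul_of_nonneg_left (hz₀ z (mem_univ z)) (hv z)
  have hosc := sum_sub_mul_le_tvDist_mul huv (fun z => hz₀ z (mem_univ z)) (fun z => hg z z₀)
  have hq0 : 0 ≤ q := (tvDist_nonneg u v).trans hq
  have hK0 : 0 ≤ K - 1 := by linarith
  calc ∑ z, u z * g z = ∑ z, v z * g z + ∑ z, (u z - v z) * g z := by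
        simp only [sub_mul, sum_sub_distrib]; ring
    _ ≤ ∑ z, v z * g z + q * ((K - 1) * g z₀) := by
        gcongr
        refine hosc.trans ?_
        rw [← sub_one_mul]
        exact mul_le_mul_of_nonneg_right hq (by linarith [hg z₀ z₀])
    _ ≤ ∑ z, v z * g z + q * ((K - 1) * ∑ z, v z * g z) := by gcongr
    _ = (1 + q * K - q) * ∑ z, v z * g z := by ring

end TotalVariation

namespace Finset

variable {ι : Type*}

lemma centerMass_eq_sum_mul_div (s : Finset ι) (w f : ι → ℝ) :
    s.centerMass w f = (∑ i ∈ s, w i * f i) / ∑ i ∈ s, w i := by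
  simp only [centerMass, smul_eq_mul, div_eq_inv_mul]

lemma centerMass_mono {s : Finset ι} {w f g : ι → ℝ} (hw : ∀ i ∈ s, 0 ≤ w i)
    (hfg : ∀ i ∈ s, f i ≤ g i) : s.centerMass w f ≤ s.centerMass w g := by
  simp only [centerMass_eq_sum_mul_div]
  exact div_le_div_of_nonneg_right (sum_le_sum fun i hi => mul_le_mul_of_nonneg_left (hfg i hi)
    (hw i hi)) (sum_nonneg hw)

lemma centerMass_le_mul_centerMass {s t : Finset ι} {w f : ι → ℝ} {K : ℝ} (hw : ∀ i, 0 ≤ w i)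
    (hs : 0 < ∑ i ∈ s, w i) (ht : 0 < ∑ i ∈ t, w i) (hf : ∀ i j, f i ≤ K * f j) :
    s.centerMass w f ≤ K * t.centerMass w f := by
  have hpointwise : ∀ i, f i ≤ K * t.centerMass w f := fun i =>
    calc f i = t.centerMass w (Function.const ι (f i)) := (centerMass_const ht.ne' _).symm
      _ ≤ t.centerMass w (fun j => K • f j) := centerMass_mono (fun j _ => hw j) fun j _ => hf i j
      _ = K * t.centerMass w f := centerMass_smul _ _ _
  calc s.centerMass w f ≤ s.centerMass w (Function.const ι (K * t.centerMass w f)) :=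
        centerMass_mono (fun i _ => hw i) fun i _ => hpointwise i
    _ = K * t.centerMass w f := centerMass_const hs.ne' _

variable {Z : Type*} [DecidableEq Z]

lemma condLaw_nonneg {s : Finset ι} {p : ι → ℝ} (hp : ∀ x, 0 ≤ p x) (r : ι → Z) (z : Z) :
    0 ≤ condLaw p s r z :=
  div_nonneg (sum_nonneg fun x _ => hp x) (sum_nonneg fun x _ => hp x)

variable [Fintype Z]

lemma centerMass_comp_eq_sum_condLaw (s : Finset ι) (p : ι → ℝ) (r : ι → Z) (g : Z → ℝ) :
    s.centerMass p (g ∘ r) = ∑ z, condLaw p s r z * g z := by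
  rw [centerMass_eq_sum_mul_div, ← sum_fiberwise s r, sum_div]
  refine sum_congr rfl fun z _ => ?_
  rw [condLaw, div_mul_eq_mul_div, sum_mul]
  congr 1
  refine sum_congr rfl fun x hx => ?_
  rw [Function.comp_apply, (mem_filter.1 hx).2]

lemma sum_condLaw {s : Finset ι} {p : ι → ℝ} (r : ι → Z) (hs : ∑ x ∈ s, p x ≠ 0) :
    ∑ z, condLaw p s r z = 1 := by
  simp only [condLaw, ← sum_div, sum_fiberwise]
  exact div_self hs

theorem centerMass_le_mul_centerMass_of_fiberwise [Fintype ι] {s t : Finset ι} {p f : ι → ℝ}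
    {r : ι → Z} {C K q : ℝ} (hp : ∀ x, 0 ≤ p x) (hr : Function.Surjective r) (hC0 : 0 ≤ C)
    (hC : ∀ x x', r x = r x' → f x ≤ C * f x') (hK1 : 1 ≤ K) (hK : ∀ x x', f x ≤ K * f x')
    (hs : 0 < ∑ x ∈ s, p x) (ht : 0 < ∑ x ∈ t, p x)
    (hq : tvDist (condLaw p s r) (condLaw p t r) ≤ q) :
    s.centerMass p f ≤ C * (1 + q * K - q) * t.centerMass p f := by
  have hfibre_min : ∀ z, ∃ x, r x = z ∧ ∀ x', r x' = z → f x ≤ f x' := by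
    intro z
    obtain ⟨x, hx, hx_min⟩ := exists_min_image (univ.filter (r · = z)) f
      (by obtain ⟨x, rfl⟩ := hr z; exact ⟨x, by simp⟩)
    exact ⟨x, (mem_filter.1 hx).2, fun x' hx' => hx_min x' (by simp [hx'])⟩
  choose σ hσ hσ_min using hfibre_min
  have hq0 : 0 ≤ q := (tvDist_nonneg _ _).trans hq
  have hfactor : 0 ≤ C * (1 + q * K - q) := mul_nonneg hC0 (by nlinarith)
  calc s.centerMass p f ≤ s.centerMass p (fun x => C • ((f ∘ σ) ∘ r) x) :=
        centerMass_mono (fun x _ => hp x) fun x _ => hC x _ (hσ _).symm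
    _ = C * ∑ z, condLaw p s r z * f (σ z) := by
        rw [centerMass_smul, centerMass_comp_eq_sum_condLaw, smul_eq_mul]; rfl
    _ ≤ C * ((1 + q * K - q) * ∑ z, condLaw p t r z * f (σ z)) := by
        gcongr
        exact sum_mul_le_of_tvDist_le (condLaw_nonneg hp r)
          ((sum_condLaw r hs.ne').trans (sum_condLaw r ht.ne').symm) (sum_condLaw r ht.ne') hK1
          (fun z z' => hK _ _) hq
    _ = C * (1 + q * K - q) * t.centerMass p ((f ∘ σ) ∘ r) := by
        rw [centerMass_comp_eq_sum_condLaw, mul_assoc]; rfl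
    _ ≤ C * (1 + q * K - q) * t.centerMass p f := by
        gcongr
        exact centerMass_mono (fun x _ => hp x) fun x _ => hσ_min _ x rfl

end Finset

theorem cdp_ldp_to_bcdp_general {d : ℕ} {Xc : Fin d → Type*}
    [∀ j, Fintype (Xc j)] [∀ j, DecidableEq (Xc j)] {Y : Type*} [Fintype Y]
    (p : (∀ j, Xc j) → ℝ) (μ : (∀ j, Xc j) → Y → ℝ) (c : Fin d → ℝ)
    (hp : ∀ x, 0 ≤ p x)
    (hμ1 : ∀ x, ∑ y, μ x y = 1)
    (hCDP : ∀ (i : Fin d) (x x' : ∀ j, Xc j), (∀ j, j ≠ i → x j = x' j) →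
      ∀ R : Finset Y, ∑ y ∈ R, μ x y ≤ Real.exp (c i) * ∑ y ∈ R, μ x' y)
    (ε : ℝ)
    (hLDP : ∀ x x' : (∀ j, Xc j), ∀ R : Finset Y,
      ∑ y ∈ R, μ x y ≤ Real.exp ε * ∑ y ∈ R, μ x' y)
    (i : Fin d) (qi : ℝ)
    (hTV : ∀ Si Si' : Finset (Xc i),
      0 < ∑ x ∈ Finset.univ.filter (fun x : ∀ j, Xc j => x i ∈ Si), p x →
      0 < ∑ x ∈ Finset.univ.filter (fun x : ∀ j, Xc j => x i ∈ Si'), p x →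
      (1 / 2) * ∑ z : (j : {j : Fin d // j ≠ i}) → Xc j,
        |(∑ x ∈ Finset.univ.filter
              (fun x : ∀ j, Xc j => x i ∈ Si ∧ ∀ j : {j : Fin d // j ≠ i}, x j = z j), p x) /
            (∑ x ∈ Finset.univ.filter (fun x : ∀ j, Xc j => x i ∈ Si), p x)
          - (∑ x ∈ Finset.univ.filter
              (fun x : ∀ j, Xc j => x i ∈ Si' ∧ ∀ j : {j : Fin d // j ≠ i}, x j = z j), p x) /
            (∑ x ∈ Finset.univ.filter (fun x : ∀ j, Xc j => x i ∈ Si'), p x)| ≤ qi) :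
    ∀ (R : Finset Y) (Si Si' : Finset (Xc i)),
      0 < ∑ x ∈ Finset.univ.filter (fun x : ∀ j, Xc j => x i ∈ Si), p x →
      0 < ∑ x ∈ Finset.univ.filter (fun x : ∀ j, Xc j => x i ∈ Si'), p x →
      (∑ x ∈ Finset.univ.filter (fun x : ∀ j, Xc j => x i ∈ Si), p x * ∑ y ∈ R, μ x y) /
          (∑ x ∈ Finset.univ.filter (fun x : ∀ j, Xc j => x i ∈ Si), p x)
        ≤ Real.exp (min (c i + Real.log (1 + qi * Real.exp ε - qi)) ε) *
          ((∑ x ∈ Finset.univ.filter (fun x : ∀ j, Xc j => x i ∈ Si'), p x * ∑ y ∈ R, μ x y) /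
            (∑ x ∈ Finset.univ.filter (fun x : ∀ j, Xc j => x i ∈ Si'), p x)) := by
  intro R Si Si' hSi hSi'
  rw [← centerMass_eq_sum_mul_div, ← centerMass_eq_sum_mul_div]
  obtain ⟨x₀, -⟩ := nonempty_of_sum_ne_zero hSi.ne'
  have hK : 1 ≤ exp ε := by simpa [hμ1] using hLDP x₀ x₀ univ
  let r : (∀ j, Xc j) → (j : {j : Fin d // j ≠ i}) → Xc j := Subtype.restrict (· ≠ i)
  have hr : Function.Surjective r :=
    have : ∀ j, Nonempty (Xc j) := fun j => ⟨x₀ j⟩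
    Subtype.surjective_restrict _
  have hfibre : ∀ (S : Finset (Xc i)) z,
      {x ∈ univ.filter (fun x : ∀ j, Xc j => x i ∈ S) | r x = z}
        = univ.filter (fun x : ∀ j, Xc j => x i ∈ S ∧ ∀ j : {j : Fin d // j ≠ i}, x j = z j) := by
    intro S z
    rw [filter_filter]
    simp only [r, funext_iff, Subtype.restrict_apply]
  have hq : tvDist (condLaw p {x | x i ∈ Si} r) (condLaw p {x | x i ∈ Si'} r) ≤ qi := by
    simpa only [tvDist, condLaw, hfibre] using hTV Si Si' hSi hSi'
  have hq0 : 0 ≤ qi := (tvDist_nonneg _ _).trans hq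
  rcases min_cases (c i + log (1 + qi * exp ε - qi)) ε with ⟨hmin, -⟩ | ⟨hmin, -⟩ <;> rw [hmin]
  · rw [exp_add, exp_log (by nlinarith)]
    exact centerMass_le_mul_centerMass_of_fiberwise hp hr (exp_pos _).le
      (fun x x' hxx' => hCDP i x x' (fun j hj => congr_fun hxx' ⟨j, hj⟩) R) hK
      (fun x x' => hLDP x x' R) hSi hSi' hq
  · exact centerMass_le_mul_centerMass hp hSi hSi' fun x x' => hLDP x x' R

/-- **CDP + LDP to BCDP.** Suppose the mechanism `μ` is `c`-CDP and `ε`-LDP and, for coordinate `i`,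
the conditional distributions of the remaining coordinates given `x_i ∈ Si` versus
`x_i ∈ Si'` are within total variation distance `qi`. Then `(p, μ)` is
`δ'ᵢ`-BCDP in coordinate `i` with `δ'ᵢ = min{cᵢ + log(1 + qᵢ e^ε − qᵢ), ε}`. -/
theorem cdp_ldp_to_bcdp {d : ℕ} {Xc : Fin d → Type*}
    [∀ j, Fintype (Xc j)] [∀ j, DecidableEq (Xc j)] {Y : Type*} [Fintype Y]
    (p : (∀ j, Xc j) → ℝ) (μ : (∀ j, Xc j) → Y → ℝ) (c : Fin d → ℝ)
    (hc : ∀ j, 0 ≤ c j)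
    (hp : ∀ x, 0 ≤ p x) (hp1 : ∑ x, p x = 1)
    (hμ : ∀ x y, 0 ≤ μ x y) (hμ1 : ∀ x, ∑ y, μ x y = 1)
    (hCDP : ∀ (i : Fin d) (x x' : ∀ j, Xc j), (∀ j, j ≠ i → x j = x' j) →
      ∀ R : Finset Y, ∑ y ∈ R, μ x y ≤ Real.exp (c i) * ∑ y ∈ R, μ x' y)
    (ε : ℝ)
    (hLDP : ∀ x x' : (∀ j, Xc j), ∀ R : Finset Y,
      ∑ y ∈ R, μ x y ≤ Real.exp ε * ∑ y ∈ R, μ x' y)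
    (i : Fin d) (qi : ℝ)
    (hTV : ∀ Si Si' : Finset (Xc i),
      0 < ∑ x ∈ Finset.univ.filter (fun x : ∀ j, Xc j => x i ∈ Si), p x →
      0 < ∑ x ∈ Finset.univ.filter (fun x : ∀ j, Xc j => x i ∈ Si'), p x →
      (1 / 2) * ∑ z : (j : {j : Fin d // j ≠ i}) → Xc j,
        |(∑ x ∈ Finset.univ.filter
              (fun x : ∀ j, Xc j => x i ∈ Si ∧ ∀ j : {j : Fin d // j ≠ i}, x j = z j), p x) /
            (∑ x ∈ Finset.univ.filter (fun x : ∀ j, Xc j => x i ∈ Si), p x)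
          - (∑ x ∈ Finset.univ.filter
              (fun x : ∀ j, Xc j => x i ∈ Si' ∧ ∀ j : {j : Fin d // j ≠ i}, x j = z j), p x) /
            (∑ x ∈ Finset.univ.filter (fun x : ∀ j, Xc j => x i ∈ Si'), p x)| ≤ qi) :
    ∀ (R : Finset Y) (Si Si' : Finset (Xc i)),
      0 < ∑ x ∈ Finset.univ.filter (fun x : ∀ j, Xc j => x i ∈ Si), p x →
      0 < ∑ x ∈ Finset.univ.filter (fun x : ∀ j, Xc j => x i ∈ Si'), p x →
      (∑ x ∈ Finset.univ.filter (fun x : ∀ j, Xc j => x i ∈ Si), p x * ∑ y ∈ R, μ x y) /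
          (∑ x ∈ Finset.univ.filter (fun x : ∀ j, Xc j => x i ∈ Si), p x)
        ≤ Real.exp (min (c i + Real.log (1 + qi * Real.exp ε - qi)) ε) *
          ((∑ x ∈ Finset.univ.filter (fun x : ∀ j, Xc j => x i ∈ Si'), p x * ∑ y ∈ R, μ x y) /
            (∑ x ∈ Finset.univ.filter (fun x : ∀ j, Xc j => x i ∈ Si'), p x)) :=
  cdp_ldp_to_bcdp_general p μ c hp hμ1 hCDP ε hLDP i qi hTV
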